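/- arXiv:2509.03224 — 9 statements merged into one kernel-verified Lean document; each statement's English description precedes it below -/
import Mathlib

section
/- Let (p1,p2,p3) be a Markov triple and set p3' = 3*p1*p2 - p3. Then p3' is a positive integer with p3' ≠ p3, (p1,p2,p3') is a Markov triple, and every positive integer x satisfying p1^2 + p2^2 + x^2 = 3*p1*p2*x equals either p3 or p3'. In particular, whenever two positive integers appear together in some Markov triple, there are precisely two Markov triples containing them, and these are related by a single mutation. -/
/-- A Markov triple: positive integers satisfying the Markov equation. -/
def IsMarkovTriple (p1 p2 p3 : ℤ) : Prop :=
  0 < p1 ∧ 0 < p2 ∧ 0 < p3 ∧ p1 ^ 2 + p2 ^ 2 + p3 ^ 2 = 3 * p1 * p2 * p3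

/-- Given a Markov triple `(p1, p2, p3)`, the mutation `p3' = 3*p1*p2 - p3` is a
positive integer different from `p3`, `(p1, p2, p3')` is again a Markov triple, and
`p3` and `p3'` are the only positive integers `x` with `p1^2 + p2^2 + x^2 = 3*p1*p2*x`.
Hence two positive integers appearing together in a Markov triple lie in precisely two
Markov triples, related by a single mutation. -/
theorem markov_mutation_unique (p1 p2 p3 : ℤ) (h : IsMarkovTriple p1 p2 p3) :
    0 < 3 * p1 * p2 - p3 ∧ 3 * p1 * p2 - p3 ≠ p3 ∧
    IsMarkovTriple p1 p2 (3 * p1 * p2 - p3) ∧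
    ∀ x : ℤ, 0 < x → p1 ^ 2 + p2 ^ 2 + x ^ 2 = 3 * p1 * p2 * x →
      x = p3 ∨ x = 3 * p1 * p2 - p3 := by
  obtain ⟨h1, h2, h3, heq⟩ := h
  have h1' : 1 ≤ p1 := h1
  have h2' : 1 ≤ p2 := h2
  -- product of the two roots is p1^2 + p2^2 > 0
  have hprod : p3 * (3 * p1 * p2 - p3) = p1 ^ 2 + p2 ^ 2 := by linear_combination -heq
  have hpos : 0 < 3 * p1 * p2 - p3 := by
    by_contra hle
    push_neg at hle
    nlinarith [sq_nonneg p1, sq_nonneg p2]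
  refine ⟨hpos, ?_, ⟨h1, h2, hpos, by linear_combination heq⟩, ?_⟩
  · -- 3*p1*p2 - p3 ≠ p3
    intro hcontra
    have h2p3 : 3 * p1 * p2 = 2 * p3 := by linarith
    -- then p1^2 + p2^2 = p3^2 and 9 p1^2 p2^2 = 4 p3^2
    have hp3sq : p3 ^ 2 = p1 ^ 2 + p2 ^ 2 := by linear_combination -heq - p3 * h2p3
    have hsq : 9 * (p1 * p2) ^ 2 = 4 * p3 ^ 2 := by
      linear_combination (3 * p1 * p2 + 2 * p3) * h2p3
    have ha : p1 ^ 2 ≤ p1 ^ 2 * p2 ^ 2 := le_mul_of_one_le_right (by positivity) (by nlinarith)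
    have hb : p2 ^ 2 ≤ p1 ^ 2 * p2 ^ 2 := le_mul_of_one_le_left (by positivity) (by nlinarith)
    nlinarith [ha, hb, hp3sq, hsq, sq_nonneg (p1 * p2), mul_pos h1 h2]
  · intro x hx hxeq
    have hfac : (x - p3) * (x - (3 * p1 * p2 - p3)) = 0 := by
      linear_combination hxeq - heq
    rcases mul_eq_zero.mp hfac with h' | h'
    · exact Or.inl (by linarith)
    · exact Or.inr (by linarith)
end

section
/- If (p, m0, m1) is a Markov triple, then as real numbers m1/(p*m0) < sigma_p; equivalently, 2*m1 < m0*(3*p + sqrt(9*p^2 - 4)). -/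
/-- For a Markov triple `(p, m0, m1)` one has `m1/(p*m0) < σ_p`, where
`σ_p = (1/2)*(3 + √(9 - 4/p^2))`; equivalently `2*m1 < m0*(3*p + √(9*p^2 - 4))`. -/
theorem markov_ratio_lt_sigma (p m0 m1 : ℤ) (h : IsMarkovTriple p m0 m1) :
    (m1 : ℝ) / ((p : ℝ) * (m0 : ℝ)) <
      (1 / 2) * (3 + Real.sqrt (9 - 4 / (p : ℝ) ^ 2)) ∧
    2 * (m1 : ℝ) < (m0 : ℝ) * (3 * (p : ℝ) + Real.sqrt (9 * (p : ℝ) ^ 2 - 4)) := by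
  obtain ⟨hp, hm0, hm1, heq⟩ := h
  have hp' : (0:ℝ) < (p:ℝ) := by exact_mod_cast hp
  have hm0' : (0:ℝ) < (m0:ℝ) := by exact_mod_cast hm0
  have hm1' : (0:ℝ) < (m1:ℝ) := by exact_mod_cast hm1
  have hp1 : (1:ℝ) ≤ (p:ℝ) := by exact_mod_cast hp
  have heq' : (p:ℝ)^2 + (m0:ℝ)^2 + (m1:ℝ)^2 = 3*(p:ℝ)*(m0:ℝ)*(m1:ℝ) := by
    exact_mod_cast heq
  set s := Real.sqrt (9*(p:ℝ)^2 - 4) with hs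
  have hnn : (0:ℝ) ≤ 9*(p:ℝ)^2 - 4 := by nlinarith
  have hsq : s^2 = 9*(p:ℝ)^2 - 4 := Real.sq_sqrt hnn
  have hsnn : 0 ≤ s := Real.sqrt_nonneg _
  have hspos : 0 < s := Real.sqrt_pos.mpr (by nlinarith)
  have h2 : 2*(m1:ℝ) < (m0:ℝ)*(3*(p:ℝ) + s) := by
    rcases le_or_gt (2*(m1:ℝ)) (3*(p:ℝ)*(m0:ℝ)) with hle | hlt
    · nlinarith [mul_pos hm0' hspos]
    · have key : (2*(m1:ℝ) - 3*(p:ℝ)*(m0:ℝ))^2 < ((m0:ℝ)*s)^2 := by nlinarith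
      have := lt_of_pow_lt_pow_left₀ 2 (mul_nonneg hm0'.le hsnn) key
      linarith
  refine ⟨?_, h2⟩
  have hrw : Real.sqrt (9 - 4 / (p : ℝ) ^ 2) = s / (p:ℝ) := by
    have h1 : (9:ℝ) - 4/(p:ℝ)^2 = (9*(p:ℝ)^2 - 4)/(p:ℝ)^2 := by field_simp
    rw [h1, Real.sqrt_div hnn, Real.sqrt_sq hp'.le]
  rw [hrw, div_lt_iff₀ (by positivity)]
  have hcalc : (1 / 2) * (3 + s / (p:ℝ)) * ((p:ℝ) * (m0:ℝ)) = (m0:ℝ)*(3*(p:ℝ) + s)/2 := by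
    field_simp
  rw [hcalc]
  linarith
end

section
/- Let (p, m0, m1) be a Markov triple with m0 ≤ m1 and define m_{n+2} = 3*p*m_{n+1} - m_n for n ≥ 0. Then m_n > 0 for all n, the sequence (m_n) is nondecreasing, and the ratios m_{n+1}/(p*m_n) converge, as n → ∞, to sigma_p = (1/2)*(3 + sqrt(9 - 4/p^2)). -/
/-!
The Vieta jump `(m n, m (n+1)) ↦ (m (n+1), 3 p m (n+1) - m n)` preserves the Markov equation
with first entry `p`, so `m (n+1)² + m n² - 3 p m n m (n+1) = -p²` for all `n`. Dividing by
`p² (m n)²`, the ratio `r = m (n+1) / (p m n)` is a root of `r² - 3 r + 1/p² + 1/(m n)² = 0`,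
and from `n = 1` on it is the larger root. The sequence grows at least linearly, so the
perturbation `1/(m n)²` vanishes in the limit and `r` tends to the larger root `σ_p` of
`r² - 3 r + 1/p² = 0`.
-/

open Filter Topology

section Recurrence

variable {R : Type*} {c : R} {m : ℕ → R}

theorem sq_add_sq_sub_mul_eq_of_recurrence [CommRing R]
    (hrec : ∀ n, m (n + 2) = c * m (n + 1) - m n) (n : ℕ) :
    m (n + 1) ^ 2 + m n ^ 2 - c * m n * m (n + 1) = m 1 ^ 2 + m 0 ^ 2 - c * m 0 * m 1 := by
  induction n with
  | zero => rfl
  | succ k ih => rw [hrec k]; linear_combination ih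

variable [CommRing R] [LinearOrder R] [IsStrictOrderedRing R]

theorem pos_and_le_succ_of_recurrence (hrec : ∀ n, m (n + 2) = c * m (n + 1) - m n)
    (hc : 2 ≤ c) (h0 : 0 < m 0) (h01 : m 0 ≤ m 1) (n : ℕ) :
    0 < m n ∧ m n ≤ m (n + 1) := by
  induction n with
  | zero => exact ⟨h0, h01⟩
  | succ k ih =>
    obtain ⟨hk, hle⟩ := ih
    have hk1 : 0 < m (k + 1) := hk.trans_le hle
    refine ⟨hk1, ?_⟩
    rw [hrec k]
    nlinarith

theorem succ_le_sub_of_recurrence (hrec : ∀ n, m (n + 2) = c * m (n + 1) - m n)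
    (hc : 3 ≤ c) (h0 : 0 < m 0) (h01 : m 0 ≤ m 1) (n : ℕ) :
    m (n + 1) ≤ m (n + 2) - m (n + 1) := by
  obtain ⟨hn, hle⟩ := pos_and_le_succ_of_recurrence hrec (by linarith) h0 h01 n
  rw [hrec n]
  nlinarith

theorem mul_le_two_mul_of_recurrence (hrec : ∀ n, m (n + 2) = c * m (n + 1) - m n)
    (hc : 2 ≤ c) (h0 : 0 < m 0) (h01 : m 0 ≤ m 1) (n : ℕ) :
    c * m (n + 1) ≤ 2 * m (n + 2) := by
  obtain ⟨hn, hle⟩ := pos_and_le_succ_of_recurrence hrec hc h0 h01 n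
  rw [hrec n]
  nlinarith

theorem succ_mul_le_of_recurrence (hrec : ∀ n, m (n + 2) = c * m (n + 1) - m n)
    (hc : 3 ≤ c) (h0 : 0 < m 0) (h01 : m 0 ≤ m 1) (n : ℕ) :
    (n + 1) * m 0 ≤ m (n + 1) := by
  induction n with
  | zero => simpa using h01
  | succ k ih =>
    have hstep := succ_le_sub_of_recurrence hrec hc h0 h01 k
    have hmono := (monotone_nat_of_le_succ fun n =>
      (pos_and_le_succ_of_recurrence hrec (by linarith) h0 h01 n).2) (Nat.zero_le (k + 1))
    push_cast
    linarith

end Recurrence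

theorem tendsto_atTop_of_recurrence {m : ℕ → ℝ} {c : ℝ}
    (hrec : ∀ n, m (n + 2) = c * m (n + 1) - m n)
    (hc : 3 ≤ c) (h0 : 0 < m 0) (h01 : m 0 ≤ m 1) : Tendsto m atTop atTop := by
  have hlin : Tendsto (fun n : ℕ => ((n : ℝ) + 1) * m 0) atTop atTop :=
    (tendsto_natCast_atTop_atTop.atTop_add tendsto_const_nhds).atTop_mul_const h0
  rw [← tendsto_add_atTop_iff_nat 1]
  exact tendsto_atTop_mono (succ_mul_le_of_recurrence hrec hc h0 h01) hlin

theorem div_mul_eq_of_sq_add_sq_sub_mul_eq {p x y : ℝ} (hp : 0 < p) (hx : 0 < x)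
    (hinv : y ^ 2 + x ^ 2 - 3 * p * x * y = -p ^ 2) (hy : 3 * p * x ≤ 2 * y) :
    y / (p * x) = 1 / 2 * (3 + √(9 - 4 / p ^ 2 - 4 / x ^ 2)) := by
  have hroot : 0 ≤ 2 * y / (p * x) - 3 := by
    rw [sub_nonneg, le_div_iff₀ (by positivity)]
    linarith
  have hdisc : 9 - 4 / p ^ 2 - 4 / x ^ 2 = (2 * y / (p * x) - 3) ^ 2 := by
    field_simp
    linear_combination -4 * hinv
  rw [hdisc, Real.sqrt_sq hroot]
  ring

theorem tendsto_half_three_add_sqrt {a : ℝ} {x : ℕ → ℝ} (hx : Tendsto x atTop atTop) :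
    Tendsto (fun n => 1 / 2 * (3 + √(a - 4 / x n ^ 2))) atTop (𝓝 (1 / 2 * (3 + √a))) := by
  have hsmall : Tendsto (fun n => 4 / x n ^ 2) atTop (𝓝 0) :=
    tendsto_const_nhds.div_atTop ((tendsto_pow_atTop two_ne_zero).comp hx)
  have hcont : Continuous fun t : ℝ => 1 / 2 * (3 + √(a - t)) := by fun_prop
  simpa only [sub_zero, Function.comp_def] using (hcont.tendsto 0).comp hsmall

/-- For a Markov triple `(p, m 0, m 1)` with `m 0 ≤ m 1` and the recursion
`m (n+2) = 3*p*m (n+1) - m n`, all `m n` are positive, the sequence is nondecreasing,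
and the ratios `m (n+1)/(p * m n)` converge to `σ_p = (1/2)*(3 + √(9 - 4/p^2))`. -/
theorem markov_ratios_tendsto_sigma (p : ℤ) (m : ℕ → ℤ)
    (h : IsMarkovTriple p (m 0) (m 1)) (h01 : m 0 ≤ m 1)
    (hrec : ∀ n : ℕ, m (n + 2) = 3 * p * m (n + 1) - m n) :
    (∀ n : ℕ, 0 < m n) ∧ Monotone m ∧
    Filter.Tendsto (fun n : ℕ => (m (n + 1) : ℝ) / ((p : ℝ) * (m n : ℝ)))
      Filter.atTop
      (nhds ((1 / 2) * (3 + Real.sqrt (9 - 4 / (p : ℝ) ^ 2)))) := by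
  obtain ⟨hp, h0, -, hmarkov⟩ := h
  have hxrec : ∀ n, (m (n + 2) : ℝ) = 3 * p * m (n + 1) - m n := fun n => by
    exact_mod_cast hrec n
  have hc : (3 : ℝ) ≤ 3 * p := by
    have : (1 : ℝ) ≤ p := by exact_mod_cast hp
    linarith
  have hx0 : (0 : ℝ) < m 0 := by exact_mod_cast h0
  have hx01 : (m 0 : ℝ) ≤ m 1 := by exact_mod_cast h01
  have hstep :=
    pos_and_le_succ_of_recurrence (m := fun n => (m n : ℝ)) hxrec (by linarith) hx0 hx01
  refine ⟨fun n => by exact_mod_cast (hstep n).1,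
    fun a b hab => by exact_mod_cast monotone_nat_of_le_succ (fun n => (hstep n).2) hab, ?_⟩
  have hinv (n : ℕ) :
      (m (n + 1) : ℝ) ^ 2 + (m n : ℝ) ^ 2 - 3 * p * m n * m (n + 1) = -(p : ℝ) ^ 2 := by
    rw [sq_add_sq_sub_mul_eq_of_recurrence (m := fun n => (m n : ℝ)) hxrec n]
    have hmarkovR : (p : ℝ) ^ 2 + (m 0 : ℝ) ^ 2 + (m 1 : ℝ) ^ 2 = 3 * p * m 0 * m 1 := by
      exact_mod_cast hmarkov
    linear_combination hmarkovR
  refine (tendsto_half_three_add_sqrt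
    (tendsto_atTop_of_recurrence (m := fun n => (m n : ℝ)) hxrec hc hx0 hx01)).congr' ?_
  filter_upwards [eventually_ge_atTop 1] with n hn
  obtain ⟨k, rfl⟩ : ∃ k, n = k + 1 := ⟨n - 1, by omega⟩
  exact (div_mul_eq_of_sq_add_sq_sub_mul_eq (by exact_mod_cast hp) (hstep (k + 1)).1 (hinv (k + 1))
    (mul_le_two_mul_of_recurrence (m := fun n => (m n : ℝ)) hxrec (by linarith) hx0 hx01 k)).symm
end

section
/- Let (p,p2,p3) be a Markov triple with gcd(p2,p) = 1 and gcd(p3,p) = 1 (which hold automatically), and let q be an integer. Then p3*q ≡ 3*p2 (mod p) if and only if (3*p*p2 - p3)*q ≡ -3*p2 (mod p); and, using the previous congruence 3*p2*p3^{-1} ≡ -3*p3*p2^{-1} (mod p), also p3*q ≡ 3*p2 (mod p) implies (3*p*p3 - p2)*q ≡ 3*p3 (mod p). Hence the unordered pair of residues {3*p2*p3^{-1} mod p, -3*p2*p3^{-1} mod p} is unchanged when the triple (p,p2,p3) is mutated at p2 or at p3; that is, mutations of Markov triples containing p preserve the companion numbers of p. -/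
/-- Mutations of Markov triples containing `p` preserve the companion numbers of `p`:
`p3*q ≡ 3*p2 (mod p)` iff `(3*p*p2 - p3)*q ≡ -3*p2 (mod p)` (mutation at `p3`), and
`p3*q ≡ 3*p2 (mod p)` implies `(3*p*p3 - p2)*q ≡ 3*p3 (mod p)` (mutation at `p2`). -/
theorem markov_mutation_preserves_companions (p p2 p3 : ℤ)
    (h : IsMarkovTriple p p2 p3)
    (h2 : Int.gcd p2 p = 1) (h3 : Int.gcd p3 p = 1) (q : ℤ) :
    (p3 * q ≡ 3 * p2 [ZMOD p] ↔ (3 * p * p2 - p3) * q ≡ -(3 * p2) [ZMOD p]) ∧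
    (p3 * q ≡ 3 * p2 [ZMOD p] → (3 * p * p3 - p2) * q ≡ 3 * p3 [ZMOD p]) := by
  obtain ⟨hp0, hp20, hp30, hM⟩ := h
  have e1 : (3 * p * p2 - p3) * q ≡ -(p3 * q) [ZMOD p] :=
    (Int.modEq_iff_dvd.mpr ⟨3 * p2 * q, by ring⟩).symm
  have e2 : (3 * p * p3 - p2) * q ≡ -(p2 * q) [ZMOD p] :=
    (Int.modEq_iff_dvd.mpr ⟨3 * p3 * q, by ring⟩).symm
  have sq : p2 ^ 2 ≡ -p3 ^ 2 [ZMOD p] :=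
    (Int.modEq_iff_dvd.mpr ⟨3 * p2 * p3 - p, by linear_combination hM⟩).symm
  constructor
  · constructor
    · intro h1
      exact e1.trans h1.neg
    · intro h1
      have := e1.symm.trans h1
      have := this.neg
      simpa using this
  · intro h1
    have hmul : p2 * (p3 * q) ≡ p2 * (3 * p2) [ZMOD p] := h1.mul_left p2
    have hstep : p3 * (p2 * q) ≡ p3 * (-(3 * p3)) [ZMOD p] := by
      have h2' : p2 * (3 * p2) ≡ p3 * (-(3 * p3)) [ZMOD p] := by
        have := sq.mul_left 3
        calc p2 * (3 * p2) = 3 * p2 ^ 2 := by ring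
          _ ≡ 3 * -p3 ^ 2 [ZMOD p] := this
          _ = p3 * (-(3 * p3)) := by ring
      calc p3 * (p2 * q) = p2 * (p3 * q) := by ring
        _ ≡ p3 * (-(3 * p3)) [ZMOD p] := hmul.trans h2'
    have hcancel : p2 * q ≡ -(3 * p3) [ZMOD p] := by
      have := Int.ModEq.cancel_left_div_gcd hp0 hstep
      rw [Int.gcd_comm p p3, h3] at this
      simpa using this
    have := e2.trans hcancel.neg
    simpa using this
end

section
/- Let (p,p2,p3) be a Markov triple with gcd(p3,p) = 1 (which holds automatically), and let q be an integer such that p3^2*(p*q - 1) ≡ p2^2 (mod p^2). Then p3*q ≡ 3*p2 (mod p). -/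
/-- If `(p,p2,p3)` is a Markov triple, `gcd(p3,p) = 1`, and
`p3^2*(p*q - 1) ≡ p2^2 (mod p^2)`, then `p3*q ≡ 3*p2 (mod p)`. -/
theorem markov_companion_from_wahl_form (p p2 p3 q : ℤ)
    (h : IsMarkovTriple p p2 p3) (h3 : Int.gcd p3 p = 1)
    (hq : p3 ^ 2 * (p * q - 1) ≡ p2 ^ 2 [ZMOD p ^ 2]) :
    p3 * q ≡ 3 * p2 [ZMOD p] := by
  obtain ⟨hp, -, -, hm⟩ := h
  have hdvd : p ^ 2 ∣ p2 ^ 2 - p3 ^ 2 * (p * q - 1) := hq.dvd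
  have hp2 : p2 ^ 2 = 3 * p * p2 * p3 - p ^ 2 - p3 ^ 2 := by linarith
  have hdvd2 : p * p ∣ p * (3 * p2 * p3 - p - p3 ^ 2 * q) := by
    have : p2 ^ 2 - p3 ^ 2 * (p * q - 1) = p * (3 * p2 * p3 - p - p3 ^ 2 * q) := by
      rw [hp2]; ring
    rw [← this]; rw [← sq]; exact hdvd
  have hdvd3 : p ∣ 3 * p2 * p3 - p - p3 ^ 2 * q :=
    (mul_dvd_mul_iff_left hp.ne').mp hdvd2
  have hdvd4 : p ∣ p3 * (3 * p2 - p3 * q) := by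
    have := dvd_add hdvd3 (dvd_refl p)
    have h2 : 3 * p2 * p3 - p - p3 ^ 2 * q + p = p3 * (3 * p2 - p3 * q) := by ring
    rwa [h2] at this
  have hcop : IsCoprime p3 p := Int.isCoprime_iff_gcd_eq_one.mpr h3
  have : p ∣ 3 * p2 - p3 * q := (hcop.symm.dvd_of_dvd_mul_left hdvd4)
  exact (Int.modEq_iff_dvd.mpr (by simpa using this.neg_right)).symm
end

section
/- Let m ≥ 1 and p ≥ 1 be integers and let b_1, …, b_m be integers. Let (e_i)_{0≤i≤m+1} and (f_i)_{0≤i≤m+1} be integer sequences, both satisfying the three-term recursion x_{i+1} = b_i*x_i - x_{i-1} for all 1 ≤ i ≤ m, with boundary values e_0 = 0, e_1 = 1, f_0 = p^2, f_{m+1} = 0. Let M be the m×m symmetric tridiagonal matrix with rational entries M_{ii} = -b_i, M_{i,i+1} = M_{i+1,i} = 1, and all other entries 0. Then M is invertible, and its inverse has entries (M^{-1})_{ij} = -e_{min(i,j)}*f_{max(i,j)}/p^2. -/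
/-- Lemma on the inverse of the intersection matrix of a Hirzebruch–Jung chain:
if `e` and `f` both satisfy the three-term recursion `x (i+1) = b i * x i - x (i-1)`
for `1 ≤ i ≤ m`, with boundary values `e 0 = 0`, `e 1 = 1`, `f 0 = p^2`,
`f (m+1) = 0`, and `M` is the tridiagonal matrix with diagonal `-b i` and
off-diagonal `1`, then `M` is invertible with
`(M⁻¹) i j = - e (min i j) * f (max i j) / p^2`. -/
theorem tridiagonal_inverse (m p : ℕ) (hm : 1 ≤ m) (hp : 1 ≤ p)
    (b e f : ℕ → ℤ)
    (he0 : e 0 = 0) (he1 : e 1 = 1)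
    (hf0 : f 0 = (p : ℤ) ^ 2) (hfm : f (m + 1) = 0)
    (hrece : ∀ i : ℕ, 1 ≤ i → i ≤ m → e (i + 1) = b i * e i - e (i - 1))
    (hrecf : ∀ i : ℕ, 1 ≤ i → i ≤ m → f (i + 1) = b i * f i - f (i - 1))
    (M : Matrix (Fin m) (Fin m) ℚ)
    (hM : ∀ i j : Fin m, M i j =
      if i = j then -(b (i.1 + 1) : ℚ)
      else if j.1 = i.1 + 1 ∨ i.1 = j.1 + 1 then 1 else 0) :
    M.det ≠ 0 ∧
    ∀ i j : Fin m, M⁻¹ i j =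
      -((e (min (i.1 + 1) (j.1 + 1)) : ℚ) * (f (max (i.1 + 1) (j.1 + 1)) : ℚ)) /
        (p : ℚ) ^ 2 := by
  have hp2 : ((p : ℚ)) ^ 2 ≠ 0 := by positivity
  -- Wronskian identity
  have wron : ∀ i : ℕ, i ≤ m → e (i + 1) * f i - e i * f (i + 1) = (p : ℤ) ^ 2 := by
    intro i
    induction i with
    | zero => intro _; simp [he0, he1, hf0]
    | succ n ih =>
      intro h
      have hn := ih (Nat.le_of_succ_le h)
      have hee := hrece (n + 1) (by omega) h
      have hff := hrecf (n + 1) (by omega) h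
      simp only [Nat.add_sub_cancel] at hee hff
      rw [hee, hff]
      linear_combination hn
  -- the key three-term identity over ℤ
  have key : ∀ x y : ℕ, 1 ≤ x → x ≤ m → 1 ≤ y → y ≤ m →
      -(e (min (x - 1) y) * f (max (x - 1) y)) - b x * -(e (min x y) * f (max x y))
        + -(e (min (x + 1) y) * f (max (x + 1) y))
      = if x = y then (p : ℤ) ^ 2 else 0 := by
    intro x y hx1 hxm hy1 hym
    have hee := hrece x hx1 hxm
    have hff := hrecf x hx1 hxm
    rcases lt_trichotomy x y with h | h | h
    · rw [if_neg (by omega), min_eq_left (by omega), max_eq_right (by omega),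
        min_eq_left (by omega), max_eq_right (by omega),
        min_eq_left (by omega), max_eq_right (by omega)]
      linear_combination (-(f y)) * hee
    · subst h
      rw [if_pos rfl, min_eq_left (by omega), max_eq_right (by omega),
        min_self, max_self, min_eq_right (by omega), max_eq_left (by omega)]
      linear_combination wron x hxm - f x * hee
    · rw [if_neg (by omega), min_eq_right (by omega), max_eq_left (by omega),
        min_eq_right (by omega), max_eq_left (by omega),
        min_eq_right (by omega), max_eq_left (by omega)]
      linear_combination (-(e y)) * hff
  -- the candidate inverse
  set Nf : ℕ → ℕ → ℚ :=
    fun x y => -((e (min x y) : ℚ) * (f (max x y) : ℚ)) / (p : ℚ) ^ 2 with hNf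
  set N : Matrix (Fin m) (Fin m) ℚ := fun i j => Nf (i.1 + 1) (j.1 + 1) with hN
  have hNf0 : ∀ y : ℕ, Nf 0 y = 0 := by
    intro y; simp [hNf, he0]
  have hNftop : ∀ y : ℕ, y ≤ m + 1 → Nf (m + 1) y = 0 := by
    intro y hy
    simp only [hNf]
    rw [max_eq_left hy, hfm]
    simp
  have hMN : M * N = 1 := by
    ext i j
    rw [Matrix.mul_apply]
    have hsum : ∀ k : Fin m, M i k * N k j =
        (if k = i then -(b (i.1 + 1) : ℚ) * Nf (i.1 + 1) (j.1 + 1) else 0)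
        + (if (k : ℕ) = i.1 + 1 then Nf (i.1 + 2) (j.1 + 1) else 0)
        + (if (k : ℕ) + 1 = i.1 then Nf i.1 (j.1 + 1) else 0) := by
      intro k
      rw [hM]
      by_cases h1 : i = k
      · subst h1
        rw [if_pos rfl, if_pos rfl, if_neg (by omega), if_neg (by omega)]
        show -(b (i.1 + 1) : ℚ) * Nf (i.1 + 1) (j.1 + 1) = _
        ring
      · have h1' : ¬ k = i := fun hh => h1 hh.symm
        by_cases h2 : (k : ℕ) = i.1 + 1
        · rw [if_neg h1, if_pos (Or.inl h2), if_neg h1', if_pos h2, if_neg (by omega)]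
          show (1 : ℚ) * Nf (k.1 + 1) (j.1 + 1) = _
          rw [h2]; ring
        · by_cases h3 : (i : ℕ) = k.1 + 1
          · rw [if_neg h1, if_pos (Or.inr h3), if_neg h1', if_neg h2, if_pos h3.symm]
            show (1 : ℚ) * Nf (k.1 + 1) (j.1 + 1) = _
            rw [← h3]; ring
          · rw [if_neg h1, if_neg (by tauto : ¬((k : ℕ) = i.1 + 1 ∨ (i : ℕ) = k.1 + 1)),
              if_neg h1', if_neg h2, if_neg (fun hh => h3 hh.symm)]
            show (0 : ℚ) * Nf (k.1 + 1) (j.1 + 1) = _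
            ring
    rw [Finset.sum_congr rfl (fun k _ => hsum k), Finset.sum_add_distrib,
      Finset.sum_add_distrib]
    have s1 : (∑ k : Fin m, if k = i then -(b (i.1 + 1) : ℚ) * Nf (i.1 + 1) (j.1 + 1) else 0)
        = -(b (i.1 + 1) : ℚ) * Nf (i.1 + 1) (j.1 + 1) := by
      rw [Finset.sum_ite_eq' Finset.univ i]
      simp
    have s2 : (∑ k : Fin m, if (k : ℕ) = i.1 + 1 then Nf (i.1 + 2) (j.1 + 1) else 0)
        = Nf (i.1 + 2) (j.1 + 1) := by
      by_cases h : i.1 + 1 < m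
      · rw [Finset.sum_eq_single (⟨i.1 + 1, h⟩ : Fin m)]
        · rw [if_pos rfl]
        · intro k _ hk
          exact if_neg (fun hh => hk (Fin.ext hh))
        · intro hk; exact absurd (Finset.mem_univ _) hk
      · rw [Finset.sum_eq_zero (fun k _ => if_neg (by omega))]
        rw [show i.1 + 2 = m + 1 by omega, hNftop (j.1 + 1) (by omega)]
    have s3 : (∑ k : Fin m, if (k : ℕ) + 1 = i.1 then Nf i.1 (j.1 + 1) else 0)
        = Nf i.1 (j.1 + 1) := by
      by_cases h : 1 ≤ i.1
      · rw [Finset.sum_eq_single (⟨i.1 - 1, by omega⟩ : Fin m)]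
        · exact if_pos (by simp; omega)
        · intro k _ hk
          refine if_neg (fun hh => hk (Fin.ext ?_))
          simp; omega
        · intro hk; exact absurd (Finset.mem_univ _) hk
      · have hi0 : i.1 = 0 := by omega
        rw [Finset.sum_eq_zero (fun k _ => if_neg (by omega)), hi0, hNf0]
    rw [s1, s2, s3]
    have hkey := key (i.1 + 1) (j.1 + 1) (by omega) i.isLt (by omega) j.isLt
    simp only [Nat.add_sub_cancel] at hkey
    by_cases hij : i = j
    · subst hij
      rw [Matrix.one_apply_eq]
      rw [if_pos rfl] at hkey
      qify at hkey
      simp only [hNf]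
      rw [show i.1 ⊓ (i.1 + 1) = i.1 by omega, show i.1 ⊔ (i.1 + 1) = i.1 + 1 by omega,
        show (i.1 + 1) ⊓ (i.1 + 1) = i.1 + 1 by omega,
        show (i.1 + 1) ⊔ (i.1 + 1) = i.1 + 1 by omega,
        show (i.1 + 1 + 1) ⊓ (i.1 + 1) = i.1 + 1 by omega,
        show (i.1 + 1 + 1) ⊔ (i.1 + 1) = i.1 + 2 by omega] at hkey
      rw [show (i.1 + 2) ⊓ (i.1 + 1) = i.1 + 1 by omega,
        show (i.1 + 2) ⊔ (i.1 + 1) = i.1 + 2 by omega,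
        show i.1 ⊓ (i.1 + 1) = i.1 by omega, show i.1 ⊔ (i.1 + 1) = i.1 + 1 by omega,
        show (i.1 + 1) ⊓ (i.1 + 1) = i.1 + 1 by omega,
        show (i.1 + 1) ⊔ (i.1 + 1) = i.1 + 1 by omega]
      field_simp
      linear_combination hkey
    · rw [Matrix.one_apply_ne hij]
      rw [if_neg (by simpa [Fin.ext_iff] using hij)] at hkey
      qify at hkey
      simp only [hNf]
      linear_combination hkey / (p : ℚ) ^ 2
  have hdet : IsUnit M.det := Matrix.isUnit_det_of_right_inverse hMN
  refine ⟨hdet.ne_zero, ?_⟩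
  intro i j
  rw [Matrix.inv_eq_right_inv hMN]
end

section
/- Let (p1,p2,p3) be a Markov triple whose entries are pairwise coprime and none divisible by 3 (both hold automatically for Markov triples), let q1 be an integer with p3*q1 ≡ 3*p2 (mod p1), and set p3' = 3*p1*p3 - p2. Then: (a) p3' > 0 and p1 divides p3'*q1 - 3*p3; (b) gcd(p3', (p3'*q1 - 3*p3)/p1) = 1, i.e. u := (p3', (p3'*q1 - 3*p3)/p1) is a primitive integer vector in Z^2; (c) in Q^2 one has ((p3/(p1*p2))*p1^2, (p3/(p1*p2))*(p1*q1 - 1)) - (0, p3/(p1*p3')) = (p1*p3/(p2*p3'))*u, so the girdle of the triangle A_{p1,q1}(p3/(p1*p2), p3/(p1*p3')) — the segment joining the vertices ((p3/(p1*p2))*p1^2, (p3/(p1*p2))*(p1*q1-1)) and (0, p3/(p1*p3')) — has integral affine length p1*p3/(p2*p3'); (d) the determinant of the 2×2 matrix with columns u and (0, p3/(p1*p3')) equals p3/p1, i.e. the integral affine displacement between the girdle and the vertex at the origin is p3/p1. -/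
theorem markov_vieta {p1 p2 p3 : ℤ} (hM : p1 ^ 2 + p2 ^ 2 + p3 ^ 2 = 3 * p1 * p2 * p3) :
    p2 * (3 * p1 * p3 - p2) = p1 ^ 2 + p3 ^ 2 := by
  linear_combination -hM

theorem IsMarkovTriple.mutation_pos {p1 p2 p3 : ℤ} (h : IsMarkovTriple p1 p2 p3) :
    0 < 3 * p1 * p3 - p2 := by
  obtain ⟨hp1, hp2, -, hM⟩ := h
  refine pos_of_mul_pos_right (a := p2) ?_ hp2.le
  rw [markov_vieta hM]
  positivity

theorem dvd_mutation_mul_sub {p1 p2 p3 q1 : ℤ}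
    (hM : p1 ^ 2 + p2 ^ 2 + p3 ^ 2 = 3 * p1 * p2 * p3) (hc12 : IsCoprime p1 p2)
    (hq : p3 * q1 ≡ 3 * p2 [ZMOD p1]) :
    p1 ∣ (3 * p1 * p3 - p2) * q1 - 3 * p3 := by
  refine hc12.dvd_of_dvd_mul_left ?_
  obtain ⟨c, hc⟩ := hq.dvd
  exact ⟨p1 * q1 - p3 * c, by linear_combination q1 * markov_vieta hM - p3 * hc⟩

theorem isCoprime_mutation_of_mul_eq {p1 p2 p3 q1 k : ℤ} (hc : IsCoprime p2 (3 * p3))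
    (hk : p1 * k = (3 * p1 * p3 - p2) * q1 - 3 * p3) :
    IsCoprime (3 * p1 * p3 - p2) k := by
  have h3p3 : IsCoprime (3 * p1 * p3 - p2) (3 * p3) := by
    have := hc.neg_left.mul_add_right_left p1
    rwa [show p1 * (3 * p3) + -p2 = 3 * p1 * p3 - p2 by ring] at this
  have hp1k : IsCoprime (3 * p1 * p3 - p2) (p1 * k) := by
    have := h3p3.neg_right.mul_add_left_right q1
    rwa [← sub_eq_add_neg, ← hk] at this
  exact hp1k.of_mul_right_right

theorem girdle_sub_eq {K : Type*} [Field K] {p1 p2 p3 p3' q1 k : K} (hp1 : p1 ≠ 0)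
    (hp2 : p2 ≠ 0) (hp3' : p3' ≠ 0) (hmut : p3' = 3 * p1 * p3 - p2)
    (hk : p1 * k = p3' * q1 - 3 * p3) :
    p3 / (p1 * p2) * (p1 * q1 - 1) - p3 / (p1 * p3') = p1 * p3 / (p2 * p3') * k := by
  field_simp
  linear_combination (-p3) * hmut - p3 * p1 * hk

theorem girdle_affine_length_general (p1 p2 p3 q1 : ℤ) (h : IsMarkovTriple p1 p2 p3)
    (hc12 : Int.gcd p1 p2 = 1) (hc23 : Int.gcd p2 p3 = 1)
    (h32 : ¬ (3 ∣ p2))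
    (hq : p3 * q1 ≡ 3 * p2 [ZMOD p1]) :
    -- (a)
    (0 < 3 * p1 * p3 - p2 ∧ p1 ∣ (3 * p1 * p3 - p2) * q1 - 3 * p3) ∧
    -- (b)
    Int.gcd (3 * p1 * p3 - p2) (((3 * p1 * p3 - p2) * q1 - 3 * p3) / p1) = 1 ∧
    -- (c): componentwise, the endpoint difference of the girdle is
    -- (p1*p3/(p2*p3')) times the primitive vector u
    (((p3 : ℚ) / ((p1 : ℚ) * (p2 : ℚ))) * (p1 : ℚ) ^ 2 - 0 =
        ((p1 : ℚ) * (p3 : ℚ) / ((p2 : ℚ) * ((3 * p1 * p3 - p2 : ℤ) : ℚ))) *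
          ((3 * p1 * p3 - p2 : ℤ) : ℚ) ∧
      ((p3 : ℚ) / ((p1 : ℚ) * (p2 : ℚ))) * ((p1 : ℚ) * (q1 : ℚ) - 1) -
          (p3 : ℚ) / ((p1 : ℚ) * ((3 * p1 * p3 - p2 : ℤ) : ℚ)) =
        ((p1 : ℚ) * (p3 : ℚ) / ((p2 : ℚ) * ((3 * p1 * p3 - p2 : ℤ) : ℚ))) *
          (((((3 * p1 * p3 - p2) * q1 - 3 * p3) / p1 : ℤ)) : ℚ)) ∧
    -- (d)
    ((3 * p1 * p3 - p2 : ℤ) : ℚ) * ((p3 : ℚ) / ((p1 : ℚ) * ((3 * p1 * p3 - p2 : ℤ) : ℚ))) -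
        (((((3 * p1 * p3 - p2) * q1 - 3 * p3) / p1 : ℤ)) : ℚ) * 0 =
      (p3 : ℚ) / (p1 : ℚ) := by
  have hpos := h.mutation_pos
  obtain ⟨hp1, hp2, -, hM⟩ := h
  obtain ⟨k, hk⟩ := dvd_mutation_mul_sub hM (Int.isCoprime_iff_gcd_eq_one.mpr hc12) hq
  rw [hk, Int.mul_ediv_cancel_left k hp1.ne']
  have hc : IsCoprime p2 (3 * p3) :=
    ((Int.prime_three.coprime_iff_not_dvd.mpr h32).symm).mul_right
      (Int.isCoprime_iff_gcd_eq_one.mpr hc23)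
  have hp1Q : (p1 : ℚ) ≠ 0 := by exact_mod_cast hp1.ne'
  have hp2Q : (p2 : ℚ) ≠ 0 := by exact_mod_cast hp2.ne'
  have hposQ : ((3 * p1 * p3 - p2 : ℤ) : ℚ) ≠ 0 := by exact_mod_cast hpos.ne'
  refine ⟨⟨hpos, dvd_mul_right p1 k⟩, Int.isCoprime_iff_gcd_eq_one.mp
    (isCoprime_mutation_of_mul_eq hc hk.symm), ⟨?_, ?_⟩, ?_⟩
  · rw [sub_zero]
    field_simp
  · exact girdle_sub_eq hp1Q hp2Q hposQ (by push_cast; ring) (by exact_mod_cast hk.symm)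
  · rw [mul_zero, sub_zero]
    field_simp

/-- Lemma on the girdle of `A_{p1,q1}(p3/(p1*p2), p3/(p1*p3'))`, where
`p3' = 3*p1*p3 - p2` is the mutation of the triple at `p2`:
(a) `p3' > 0` and `p1 ∣ p3'*q1 - 3*p3`;
(b) `u = (p3', (p3'*q1 - 3*p3)/p1)` is a primitive integer vector;
(c) the difference of the endpoints of the girdle equals `(p1*p3/(p2*p3')) • u`,
    i.e. the girdle has integral affine length `p1*p3/(p2*p3')`;
(d) the determinant of the matrix with columns `u` and `(0, p3/(p1*p3'))` equals
    `p3/p1`, the integral affine displacement between the girdle and the origin. -/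
theorem girdle_affine_length (p1 p2 p3 q1 : ℤ) (h : IsMarkovTriple p1 p2 p3)
    (hc12 : Int.gcd p1 p2 = 1) (hc13 : Int.gcd p1 p3 = 1) (hc23 : Int.gcd p2 p3 = 1)
    (h31 : ¬ (3 ∣ p1)) (h32 : ¬ (3 ∣ p2)) (h33 : ¬ (3 ∣ p3))
    (hq : p3 * q1 ≡ 3 * p2 [ZMOD p1]) :
    -- (a)
    (0 < 3 * p1 * p3 - p2 ∧ p1 ∣ (3 * p1 * p3 - p2) * q1 - 3 * p3) ∧
    -- (b)
    Int.gcd (3 * p1 * p3 - p2) (((3 * p1 * p3 - p2) * q1 - 3 * p3) / p1) = 1 ∧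
    -- (c): componentwise, the endpoint difference of the girdle is
    -- (p1*p3/(p2*p3')) times the primitive vector u
    (((p3 : ℚ) / ((p1 : ℚ) * (p2 : ℚ))) * (p1 : ℚ) ^ 2 - 0 =
        ((p1 : ℚ) * (p3 : ℚ) / ((p2 : ℚ) * ((3 * p1 * p3 - p2 : ℤ) : ℚ))) *
          ((3 * p1 * p3 - p2 : ℤ) : ℚ) ∧
      ((p3 : ℚ) / ((p1 : ℚ) * (p2 : ℚ))) * ((p1 : ℚ) * (q1 : ℚ) - 1) -
          (p3 : ℚ) / ((p1 : ℚ) * ((3 * p1 * p3 - p2 : ℤ) : ℚ)) =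
        ((p1 : ℚ) * (p3 : ℚ) / ((p2 : ℚ) * ((3 * p1 * p3 - p2 : ℤ) : ℚ))) *
          (((((3 * p1 * p3 - p2) * q1 - 3 * p3) / p1 : ℤ)) : ℚ)) ∧
    -- (d)
    ((3 * p1 * p3 - p2 : ℤ) : ℚ) * ((p3 : ℚ) / ((p1 : ℚ) * ((3 * p1 * p3 - p2 : ℤ) : ℚ))) -
        (((((3 * p1 * p3 - p2) * q1 - 3 * p3) / p1 : ℤ)) : ℚ) * 0 =
      (p3 : ℚ) / (p1 : ℚ) :=
  girdle_affine_length_general p1 p2 p3 q1 h hc12 hc23 h32 hq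
end

section
/- Let p ≥ 2 and m ≥ 1 be integers, let c0 be an integer with 1 ≤ c0 ≤ p, let e_1,…,e_m and f_1,…,f_m be integers with e_i ≥ 1, f_i ≥ 1 and e_i + f_i ≤ p^2 for every i, and let χ_1,…,χ_m be nonnegative integers. Write Q = Σ_{i=1}^m Σ_{j=1}^m χ_i*χ_j*e_{min(i,j)}*f_{max(i,j)}. Assume (i) c0^2 = Q, and (ii) 2*p^2 = (3*p*c0 - c0^2) + Q + Σ_{i=1}^m χ_i*(p^2 - e_i - f_i). Then there is exactly one index i0 with χ_{i0} ≠ 0; for this index χ_{i0} = 1, c0^2 = e_{i0}*f_{i0}, p^2 + e_{i0} + f_{i0} = 3*p*c0, and consequently (p^2 + e_{i0} + f_{i0})^2 = 9*p^2*e_{i0}*f_{i0}. -/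
open Finset

private lemma adj_contra (p c0 n : ℤ) (hp : 2 ≤ p) (hc0 : 1 ≤ c0) (h2 : 2 ≤ n)
    (hnle : n ≤ c0) (h3c0 : 3 * c0 ≤ 2 * p)
    (hQS : n * p ^ 2 + n ^ 2 - 2 * n ≤ c0 ^ 2 + (2 * p ^ 2 - 3 * p * c0)) : False := by
  have hA : 0 ≤ (c0 - n) * (3 * p - c0 - n) := mul_nonneg (by linarith) (by linarith)
  have hB : 0 ≤ (n - 2) * p ^ 2 := mul_nonneg (by linarith) (sq_nonneg p)
  have hC : 0 < n * (3 * p - 2) := mul_pos (by linarith) (by linarith)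
  nlinarith [hA, hB, hC]

private lemma self_le_sq' (x : ℤ) (hx : 0 ≤ x) : x ≤ x ^ 2 := by
  rcases hx.lt_or_eq with h | h
  · have h1 : 1 ≤ x := h
    nlinarith
  · simp [← h]

open Finset in
/-- Arithmetic core of Lemmas `chi` and `markov_triple` (Section 5.5): under the
self-intersection condition (i) and the adjunction identity (ii), exactly one `χ i`
is nonzero, it equals `1`, and the corresponding `(p^2, e i0, f i0)` satisfies the
squared Markov equation. -/
theorem adjunction_arithmetic (p c0 : ℤ) (m : ℕ) (hm : 1 ≤ m)
    (hp : 2 ≤ p) (hc0 : 1 ≤ c0) (hc0p : c0 ≤ p)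
    (e f χ : ℕ → ℤ)
    (hef : ∀ i ∈ Finset.Icc 1 m, 1 ≤ e i ∧ 1 ≤ f i ∧ e i + f i ≤ p ^ 2)
    (hχ : ∀ i ∈ Finset.Icc 1 m, 0 ≤ χ i)
    (hQ : c0 ^ 2 =
      ∑ i ∈ Finset.Icc 1 m, ∑ j ∈ Finset.Icc 1 m,
        χ i * χ j * e (min i j) * f (max i j))
    (hadj : 2 * p ^ 2 =
      (3 * p * c0 - c0 ^ 2) +
      (∑ i ∈ Finset.Icc 1 m, ∑ j ∈ Finset.Icc 1 m,
        χ i * χ j * e (min i j) * f (max i j)) +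
      ∑ i ∈ Finset.Icc 1 m, χ i * (p ^ 2 - e i - f i)) :
    ∃ i0 ∈ Finset.Icc 1 m,
      χ i0 = 1 ∧
      (∀ j ∈ Finset.Icc 1 m, j ≠ i0 → χ j = 0) ∧
      c0 ^ 2 = e i0 * f i0 ∧
      p ^ 2 + e i0 + f i0 = 3 * p * c0 ∧
      (p ^ 2 + e i0 + f i0) ^ 2 = 9 * p ^ 2 * (e i0 * f i0) := by
  set I := Finset.Icc 1 m with hIdef
  set n := ∑ i ∈ I, χ i with hndef
  set S := ∑ i ∈ I, χ i * (p ^ 2 - e i - f i) with hSdef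
  clear_value n S
  have hmm : ∀ i ∈ I, ∀ j ∈ I, min i j ∈ I ∧ max i j ∈ I := by
    intro i hi j hj
    simp only [hIdef, Finset.mem_Icc] at *
    omega
  have hnn : 0 ≤ n := hndef ▸ Finset.sum_nonneg hχ
  -- S = 2p^2 - 3pc0
  have hS : S = 2 * p ^ 2 - 3 * p * c0 := by
    rw [← hQ] at hadj; linarith
  have hSnn : 0 ≤ S := by
    rw [hSdef]
    apply Finset.sum_nonneg
    intro i hi
    have h1 := hef i hi
    have h2 := hχ i hi
    have : 0 ≤ p ^ 2 - e i - f i := by linarith [h1.2.2]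
    exact mul_nonneg h2 this
  have h3c0 : 3 * c0 ≤ 2 * p := by nlinarith [hS, hSnn]
  -- key lower bound for Q
  have hkey : ∑ i ∈ I, ∑ j ∈ I,
      (χ i * χ j + if i = j then χ i ^ 2 * (e i + f i) - 2 * χ i ^ 2 else 0) ≤
      ∑ i ∈ I, ∑ j ∈ I, χ i * χ j * e (min i j) * f (max i j) := by
    apply Finset.sum_le_sum
    intro i hi
    apply Finset.sum_le_sum
    intro j hj
    have hei := hef i hi
    have hej := hef j hj
    have hχi := hχ i hi
    have hχj := hχ j hj
    obtain ⟨hmin, hmax⟩ := hmm i hi j hj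
    have heij := (hef _ hmin).1
    have hfij := (hef _ hmax).2.1
    by_cases h : i = j
    · subst h
      simp only [if_pos rfl, eq_self_iff_true, if_true, min_self, max_self]
      nlinarith [mul_nonneg hχi hχi, sq_nonneg (χ i), (hef i hi).1, (hef i hi).2.1,
        mul_nonneg (sq_nonneg (χ i)) (mul_nonneg (sub_nonneg.2 (hef i hi).1) (sub_nonneg.2 (hef i hi).2.1))]
    · simp only [if_neg h, add_zero]
      have h1 : 0 ≤ χ i * χ j := mul_nonneg hχi hχj
      have he0 : (0:ℤ) ≤ e (min i j) := le_trans zero_le_one heij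
      nlinarith [mul_nonneg h1 (sub_nonneg.2 heij), mul_nonneg (mul_nonneg h1 he0) (sub_nonneg.2 hfij)]
  -- evaluate left side of hkey
  have hLHS : ∑ i ∈ I, ∑ j ∈ I,
      (χ i * χ j + if i = j then χ i ^ 2 * (e i + f i) - 2 * χ i ^ 2 else 0) =
      n ^ 2 + ∑ i ∈ I, (χ i ^ 2 * (e i + f i) - 2 * χ i ^ 2) := by
    have : ∀ i ∈ I, ∑ j ∈ I,
        (χ i * χ j + if i = j then χ i ^ 2 * (e i + f i) - 2 * χ i ^ 2 else 0)
        = χ i * n + (χ i ^ 2 * (e i + f i) - 2 * χ i ^ 2) := by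
      intro i hi
      rw [Finset.sum_add_distrib, ← Finset.mul_sum, Finset.sum_ite_eq, if_pos hi, ← hndef]
    rw [Finset.sum_congr rfl this, Finset.sum_add_distrib, ← Finset.sum_mul, ← hndef]
    ring
  rw [hLHS, ← hQ] at hkey
  -- Q + S lower bound
  have hQS : n * p ^ 2 + n ^ 2 - 2 * n ≤ c0 ^ 2 + S := by
    have hterm : ∀ i ∈ I, χ i * p ^ 2 - 2 * χ i ≤
        (χ i ^ 2 * (e i + f i) - 2 * χ i ^ 2) + χ i * (p ^ 2 - e i - f i) := by
      intro i hi
      have hχi := hχ i hi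
      have hsq : χ i ≤ χ i ^ 2 := self_le_sq' _ hχi
      have h2 : 2 ≤ e i + f i := by linarith [(hef i hi).1, (hef i hi).2.1]
      nlinarith [mul_nonneg (sub_nonneg.2 hsq) (sub_nonneg.2 h2)]
    have := Finset.sum_le_sum hterm
    rw [Finset.sum_add_distrib, ← hSdef] at this
    have hsum1 : ∑ i ∈ I, (χ i * p ^ 2 - 2 * χ i) = n * p ^ 2 - 2 * n := by
      rw [Finset.sum_sub_distrib, ← Finset.sum_mul, ← Finset.mul_sum, ← hndef]
    rw [hsum1] at this
    linarith [hkey]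
  -- n ≤ c0
  have hnle : n ≤ c0 := by
    have hn2 : n ^ 2 ≤ c0 ^ 2 := by
      have : (∑ i ∈ I, χ i) * (∑ j ∈ I, χ j) = ∑ i ∈ I, ∑ j ∈ I, χ i * χ j :=
        Finset.sum_mul_sum I I χ χ
      have hle : ∑ i ∈ I, ∑ j ∈ I, χ i * χ j ≤
          ∑ i ∈ I, ∑ j ∈ I, χ i * χ j * e (min i j) * f (max i j) := by
        apply Finset.sum_le_sum; intro i hi
        apply Finset.sum_le_sum; intro j hj
        have h1 : 0 ≤ χ i * χ j := mul_nonneg (hχ i hi) (hχ j hj)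
        obtain ⟨hmin, hmax⟩ := hmm i hi j hj
        have heij := (hef _ hmin).1
        have hfij := (hef _ hmax).2.1
        have he0 : (0:ℤ) ≤ e (min i j) := le_trans zero_le_one heij
        nlinarith [mul_nonneg h1 (sub_nonneg.2 heij), mul_nonneg (mul_nonneg h1 he0) (sub_nonneg.2 hfij)]
      calc n ^ 2 = (∑ i ∈ I, χ i) * (∑ j ∈ I, χ j) := by rw [← hndef]; ring
        _ = ∑ i ∈ I, ∑ j ∈ I, χ i * χ j := this
        _ ≤ _ := hle
        _ = c0 ^ 2 := hQ.symm
    nlinarith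
  -- n = 1
  have hn1 : n = 1 := by
    rcases lt_or_ge n 1 with h | h
    · -- n = 0 : all χ zero, Q = 0, contradiction
      exfalso
      have hn0 : n = 0 := le_antisymm (by omega) hnn
      have hall : ∀ i ∈ I, χ i = 0 :=
        (Finset.sum_eq_zero_iff_of_nonneg hχ).1 (hndef ▸ hn0)
      have : c0 ^ 2 = 0 := by
        rw [hQ]
        apply Finset.sum_eq_zero
        intro i hi
        apply Finset.sum_eq_zero
        intro j hj
        rw [hall i hi]; ring
      nlinarith
    rcases lt_or_ge n 2 with h2 | h2
    · omega
    · exfalso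
      rw [hS] at hQS
      exact adj_contra p c0 n hp hc0 h2 hnle h3c0 hQS
  -- extract i0
  obtain ⟨i0, hi0, hχi0pos⟩ : ∃ i ∈ I, 0 < χ i := by
    by_contra hcon
    push_neg at hcon
    have : n = 0 := hndef ▸ Finset.sum_eq_zero (fun i hi => le_antisymm (hcon i hi) (hχ i hi))
    omega
  have hsplit : χ i0 + ∑ j ∈ I.erase i0, χ j = n := hndef ▸ Finset.add_sum_erase I χ hi0
  have herasenn : 0 ≤ ∑ j ∈ I.erase i0, χ j :=
    Finset.sum_nonneg (fun j hj => hχ j (Finset.mem_of_mem_erase hj))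
  have hχ1 : χ i0 = 1 := by omega
  have herase0 : ∑ j ∈ I.erase i0, χ j = 0 := by omega
  have hzero : ∀ j ∈ I, j ≠ i0 → χ j = 0 := by
    intro j hj hne
    have hjm : j ∈ I.erase i0 := Finset.mem_erase.2 ⟨hne, hj⟩
    exact (Finset.sum_eq_zero_iff_of_nonneg
      (fun k hk => hχ k (Finset.mem_of_mem_erase hk))).1 herase0 j hjm
  -- evaluate Q
  have hQval : c0 ^ 2 = e i0 * f i0 := by
    rw [hQ]
    rw [Finset.sum_eq_single_of_mem i0 hi0 (fun b hb hne => by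
      apply Finset.sum_eq_zero; intro j hj; rw [hzero b hb hne]; ring)]
    rw [Finset.sum_eq_single_of_mem i0 hi0 (fun b hb hne => by
      rw [hzero b hb hne]; ring)]
    rw [min_self, max_self, hχ1]; ring
  -- evaluate S
  have hSval : S = p ^ 2 - e i0 - f i0 := by
    rw [hSdef]
    rw [Finset.sum_eq_single_of_mem i0 hi0 (fun b hb hne => by rw [hzero b hb hne]; ring)]
    rw [hχ1]; ring
  have hmarkov : p ^ 2 + e i0 + f i0 = 3 * p * c0 := by
    rw [hSval] at hS; linarith
  exact ⟨i0, hi0, hχ1, hzero, hQval, hmarkov, by rw [hmarkov, ← hQval]; ring⟩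
end

section
/- Define three mutation moves on ordered triples of positive integers: (p1,p2,p3) ↦ (3*p2*p3 - p1, p2, p3), (p1,p2,p3) ↦ (p1, 3*p1*p3 - p2, p3), and (p1,p2,p3) ↦ (p1, p2, 3*p1*p2 - p3). Then every Markov triple can be obtained from the triple (1,1,1) by a finite sequence of these mutation moves together with permutations of the entries. -/
/-- One step: a mutation at one of the three entries, or a permutation of the
entries. -/
def MarkovStep : ℤ × ℤ × ℤ → ℤ × ℤ × ℤ → Prop := fun t t' =>
  -- mutations
  t' = (3 * t.2.1 * t.2.2 - t.1, t.2.1, t.2.2) ∨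
  t' = (t.1, 3 * t.1 * t.2.2 - t.2.1, t.2.2) ∨
  t' = (t.1, t.2.1, 3 * t.1 * t.2.1 - t.2.2) ∨
  -- permutations of the entries
  t' = (t.1, t.2.2, t.2.1) ∨
  t' = (t.2.1, t.1, t.2.2) ∨
  t' = (t.2.1, t.2.2, t.1) ∨
  t' = (t.2.2, t.1, t.2.1) ∨
  t' = (t.2.2, t.2.1, t.1)

/-!
Vieta descent: for a Markov triple `(a, b, c)`, the third entry `c` is a root of
`x ^ 2 - 3 a b x + (a ^ 2 + b ^ 2)`, so the mutation replaces it by the other root `c'`, with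
`c c' = a ^ 2 + b ^ 2`. When `c` is the largest entry and `c ≥ 2`, one has `a ^ 2 + b ^ 2 < c ^ 2`,
hence `0 < c' < c`. So after permuting the largest entry to the third place, mutating it
decreases the sum of the entries, until `(1, 1, 1)` is reached.
-/

open Relation

namespace MarkovStep

theorem mutate₃ (a b c : ℤ) : MarkovStep (a, b, 3 * a * b - c) (a, b, c) := by
  right; right; left
  simp

theorem swap₂₃ (a b c : ℤ) : MarkovStep (a, c, b) (a, b, c) := by
  right; right; right; left
  rfl

theorem rotate (a b c : ℤ) : MarkovStep (b, c, a) (a, b, c) := by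
  right; right; right; right; right; right; left
  rfl

end MarkovStep

namespace IsMarkovTriple

variable {a b c : ℤ}

theorem swap₁₂ (h : IsMarkovTriple a b c) : IsMarkovTriple b a c :=
  ⟨h.2.1, h.1, h.2.2.1, by linear_combination h.2.2.2⟩

theorem swap₂₃ (h : IsMarkovTriple a b c) : IsMarkovTriple a c b :=
  ⟨h.1, h.2.2.1, h.2.1, by linear_combination h.2.2.2⟩

theorem rotate (h : IsMarkovTriple a b c) : IsMarkovTriple b c a :=
  ⟨h.2.1, h.2.2.1, h.1, by linear_combination h.2.2.2⟩

theorem mul_mutate₃ (h : IsMarkovTriple a b c) : (3 * a * b - c) * c = a ^ 2 + b ^ 2 := by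
  linear_combination -h.2.2.2

theorem mutate₃ (h : IsMarkovTriple a b c) : IsMarkovTriple a b (3 * a * b - c) := by
  refine ⟨h.1, h.2.1, ?_, by linear_combination h.2.2.2⟩
  have : 0 < (3 * a * b - c) * c := h.mul_mutate₃ ▸ by nlinarith [h.1, h.2.1]
  exact pos_of_mul_pos_left this h.2.2.1.le

theorem sq_add_sq_lt (h : IsMarkovTriple a b c) (hac : a ≤ c) (hbc : b ≤ c) (hc : 2 ≤ c) :
    a ^ 2 + b ^ 2 < c ^ 2 := by
  wlog hab : a ≤ b generalizing a b
  · linarith [this h.swap₁₂ hbc hac (by omega)]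
  obtain ⟨ha, hb, -, heq⟩ := h
  -- `2 a ^ 2 ≤ a b c` and `2 b ^ 2 ≤ 2 a b c`, so `2 (a ^ 2 + b ^ 2) ≤ 3 a b c = a ^ 2 + b ^ 2 + c ^ 2`
  nlinarith [mul_le_mul_of_nonneg_left hab ha.le, mul_le_mul_of_nonneg_left hbc hb.le,
    mul_nonneg (mul_nonneg ha.le hb.le) (by omega : (0 : ℤ) ≤ c - 2),
    mul_nonneg (mul_nonneg hb.le (by omega : (0 : ℤ) ≤ c)) (by omega : (0 : ℤ) ≤ a - 1)]

theorem mutate₃_lt (h : IsMarkovTriple a b c) (hac : a ≤ c) (hbc : b ≤ c) (hc : 2 ≤ c) :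
    3 * a * b - c < c :=
  lt_of_mul_lt_mul_right (by nlinarith [h.mul_mutate₃, h.sq_add_sq_lt hac hbc hc]) h.2.2.1.le

theorem eq_one_of_le_one (h : IsMarkovTriple a b c) (hac : a ≤ c) (hbc : b ≤ c) (hc : c ≤ 1) :
    (a, b, c) = (1, 1, 1) := by
  obtain ⟨ha, hb, -, -⟩ := h
  simp only [Prod.mk.injEq]
  omega

theorem reachable_of_max_third (h : IsMarkovTriple a b c) (hac : a ≤ c) (hbc : b ≤ c)
    (ih : ∀ a' b' c', IsMarkovTriple a' b' c' → a' + b' + c' < a + b + c →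
      ReflTransGen MarkovStep (1, 1, 1) (a', b', c')) :
    ReflTransGen MarkovStep (1, 1, 1) (a, b, c) := by
  rcases le_or_gt c 1 with hc | hc
  · rw [h.eq_one_of_le_one hac hbc hc]
  · exact (ih _ _ _ h.mutate₃ (by linarith [h.mutate₃_lt hac hbc hc])).tail (.mutate₃ a b c)

end IsMarkovTriple

theorem IsMarkovTriple.reachable {a b c : ℤ} (h : IsMarkovTriple a b c) :
    ReflTransGen MarkovStep (1, 1, 1) (a, b, c) := by
  have ih (a' b' c' : ℤ) (h' : IsMarkovTriple a' b' c') (_ : a' + b' + c' < a + b + c) :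
      ReflTransGen MarkovStep (1, 1, 1) (a', b', c') :=
    h'.reachable
  rcases le_total a b with hab | hba
  · rcases le_total b c with hbc | hcb
    · exact h.reachable_of_max_third (hab.trans hbc) hbc ih
    · have := h.swap₂₃.reachable_of_max_third hab hcb fun a' b' c' h' _ =>
        ih a' b' c' h' (by linarith)
      exact this.tail (.swap₂₃ a b c)
  · rcases le_total a c with hac | hca
    · exact h.reachable_of_max_third hac (hba.trans hac) ih
    · have := h.rotate.reachable_of_max_third hba hca fun a' b' c' h' _ =>
        ih a' b' c' h' (by linarith)
      exact this.tail (.rotate a b c)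
termination_by (a + b + c).toNat
decreasing_by have := h.1; have := h.2.1; have := h.2.2.1; omega

/-- Every Markov triple is obtained from `(1,1,1)` by a finite sequence of mutations
and permutations of the entries. -/
theorem markov_tree_reaches_all (p1 p2 p3 : ℤ) (h : IsMarkovTriple p1 p2 p3) :
    Relation.ReflTransGen MarkovStep (1, 1, 1) (p1, p2, p3) :=
  h.reachable
end
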